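/- arXiv:2602.06215 — 4 statements merged into one kernel-verified Lean document; each statement's English description precedes it below -/
import Mathlib

section
/- Let n ≥ 1, μ > 0, and let L : ℝ → Matrix (Fin n) (Fin n) ℝ be a time-varying matrix such that for every t: L(t) is symmetric, L(t) annihilates the all-ones vector (L(t) *ᵥ 𝟙 = 0), and for every y ∈ ℝⁿ with ∑ᵢ yᵢ = 0 one has ⟪y, L(t) *ᵥ y⟫ ≥ μ‖y‖². If x : ℝ → (Fin n → ℝ) is differentiable and satisfies the first-order consensus dynamics x′(t) = −L(t) *ᵥ x(t) for all t ≥ 0, then all agents reach consensus on the initial average: for every i, xᵢ(t) → (1/n) ∑ⱼ xⱼ(0) as t → ∞; in particular |xᵢ(t) − xⱼ(t)| → 0 for all i, j. -/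
open Filter Matrix Real Topology

/-! Symmetry and `L 𝟙 = 0` give `𝟙ᵀ L = 0`, so the sum of the states is conserved and the deviation
`x t - c 𝟙` from the initial average `c` stays in the zero-sum subspace. There the connectivity
bound applies, so `V t = ‖x t - c 𝟙‖²` satisfies `V' = -2 ⟪x - c 𝟙, L (x - c 𝟙)⟫ ≤ -2 μ V`, and
Grönwall's inequality gives `V t ≤ V 0 * exp (-2 μ t) → 0`. -/

namespace Matrix

variable {ι R : Type*} [Fintype ι]

theorem sum_mulVec_eq_zero_of_isSymm [CommSemiring R] {L : Matrix ι ι R} (hsymm : L.IsSymm)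
    (hones : L *ᵥ (fun _ => 1) = 0) (v : ι → R) : ∑ i, (L *ᵥ v) i = 0 := by
  rw [← one_dotProduct, dotProduct_mulVec, ← mulVec_transpose, hsymm.eq]
  exact (congrArg (· ⬝ᵥ v) hones).trans (zero_dotProduct v)

theorem mulVec_sub_const [CommRing R] {L : Matrix ι ι R} (hones : L *ᵥ (fun _ => 1) = 0)
    (v : ι → R) (c : R) : L *ᵥ (fun i => v i - c) = L *ᵥ v := by
  have : (fun i => v i - c) = v - c • fun _ => 1 := by ext; simp
  rw [this, mulVec_sub, mulVec_smul, hones, smul_zero, sub_zero]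

end Matrix

section

variable {ι : Type*} [Fintype ι]

theorem sum_sub_average_eq_zero (v : ι → ℝ) :
    ∑ i, (v i - 1 / (Fintype.card ι : ℝ) * ∑ j, v j) = 0 := by
  rcases isEmpty_or_nonempty ι with _ | _
  · simp
  · rw [Finset.sum_sub_distrib, Finset.sum_const, Finset.card_univ, nsmul_eq_mul]
    field_simp
    ring

theorem sum_eq_of_hasDerivAt_of_sum_eq_zero {x x' : ℝ → ι → ℝ} {a : ℝ}
    (hx : ∀ t, a ≤ t → HasDerivAt x (x' t) t) (hsum : ∀ t, a ≤ t → ∑ i, x' t i = 0)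
    {t : ℝ} (ht : a ≤ t) : ∑ i, x t i = ∑ i, x a i := by
  have hderiv : ∀ s, a ≤ s → HasDerivAt (fun s => ∑ i, x s i) 0 s := fun s hs => by
    simpa only [hsum s hs] using
      HasDerivAt.fun_sum (u := Finset.univ) fun i _ => hasDerivAt_pi.1 (hx s hs) i
  exact constant_of_has_deriv_right_zero
    (fun s hs => (hderiv s hs.1).continuousAt.continuousWithinAt)
    (fun s hs => (hderiv s hs.1).hasDerivWithinAt) t ⟨ht, le_rfl⟩

theorem hasDerivAt_sum_sq_sub {x : ℝ → ι → ℝ} {x' : ι → ℝ} {t : ℝ} (hx : HasDerivAt x x' t)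
    (c : ℝ) : HasDerivAt (fun s => ∑ i, (x s i - c) ^ 2) (∑ i, 2 * (x t i - c) * x' i) t := by
  have hsq (i : ι) : HasDerivAt (fun s => (x s i - c) ^ 2) (2 * (x t i - c) * x' i) t := by
    simpa using ((hasDerivAt_pi.1 hx i).sub_const c).fun_pow 2
  exact HasDerivAt.fun_sum fun i _ => hsq i

theorem tendsto_of_tendsto_sum_sq_sub {α : Type*} {l : Filter α} {f : α → ι → ℝ} {c : ℝ}
    (hf : Tendsto (fun a => ∑ i, (f a i - c) ^ 2) l (𝓝 0)) (i : ι) :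
    Tendsto (fun a => f a i) l (𝓝 c) := by
  have hsq : Tendsto (fun a => (f a i - c) ^ 2) l (𝓝 0) :=
    squeeze_zero (fun _ => sq_nonneg _)
      (fun a => Finset.single_le_sum (fun j _ => sq_nonneg (f a j - c)) (Finset.mem_univ i)) hf
  have habs : Tendsto (fun a => |f a i - c|) l (𝓝 0) := by
    simpa only [sqrt_sq_eq_abs, sqrt_zero] using hsq.sqrt
  exact tendsto_iff_norm_sub_tendsto_zero.2 habs

end

theorem le_mul_exp_of_hasDerivAt_le_mul {f f' : ℝ → ℝ} {K a : ℝ}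
    (hf : ∀ t, a ≤ t → HasDerivAt f (f' t) t) (bound : ∀ t, a ≤ t → f' t ≤ K * f t)
    {t : ℝ} (ht : a ≤ t) : f t ≤ f a * exp (K * (t - a)) := by
  rw [← gronwallBound_ε0]
  refine le_gronwallBound_of_liminf_deriv_right_le
    (fun s hs => (hf s hs.1).continuousAt.continuousWithinAt)
    (fun s hs r hr => ?_) le_rfl (fun s hs => by simpa using bound s hs.1) t ⟨ht, le_rfl⟩
  simpa only [slope_def_module, smul_eq_mul] using
    (hf s hs.1).hasDerivWithinAt.liminf_right_slope_le hr

section Consensus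

variable {ι : Type*} [Fintype ι] {μ : ℝ}

theorem sum_mul_neg_mulVec_le {L : Matrix ι ι ℝ} (hones : L *ᵥ (fun _ => 1) = 0)
    (hconn : ∀ y : ι → ℝ, ∑ i, y i = 0 → μ * ∑ i, y i ^ 2 ≤ ∑ i, y i * (L *ᵥ y) i)
    {v : ι → ℝ} {c : ℝ} (hv : ∑ i, (v i - c) = 0) :
    ∑ i, 2 * (v i - c) * -(L *ᵥ v) i ≤ -(2 * μ) * ∑ i, (v i - c) ^ 2 := by
  have hquad := hconn _ hv
  rw [← mulVec_sub_const hones v c]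
  calc ∑ i, 2 * (v i - c) * -(L *ᵥ fun j => v j - c) i
      = -2 * ∑ i, (v i - c) * (L *ᵥ fun j => v j - c) i := by
        rw [Finset.mul_sum]; exact Finset.sum_congr rfl fun i _ => by ring
    _ ≤ -(2 * μ) * ∑ i, (v i - c) ^ 2 := by linarith

theorem tendsto_average_of_consensus (hμ : 0 < μ) {L : ℝ → Matrix ι ι ℝ}
    (hsymm : ∀ t, (L t).IsSymm) (hones : ∀ t, L t *ᵥ (fun _ => 1) = 0)
    (hconn : ∀ t, ∀ y : ι → ℝ, ∑ i, y i = 0 → μ * ∑ i, y i ^ 2 ≤ ∑ i, y i * (L t *ᵥ y) i)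
    {x : ℝ → ι → ℝ} (hode : ∀ t, 0 ≤ t → HasDerivAt x (-(L t *ᵥ x t)) t) (i : ι) :
    Tendsto (fun t => x t i) atTop (𝓝 (1 / (Fintype.card ι : ℝ) * ∑ j, x 0 j)) := by
  set c := 1 / (Fintype.card ι : ℝ) * ∑ j, x 0 j
  set V := fun t => ∑ i, (x t i - c) ^ 2
  have hmean (t : ℝ) (ht : 0 ≤ t) : ∑ i, (x t i - c) = 0 := by
    have hconserved := sum_eq_of_hasDerivAt_of_sum_eq_zero hode (fun s _ => by
      simp [Finset.sum_neg_distrib, sum_mulVec_eq_zero_of_isSymm (hsymm s) (hones s)]) ht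
    simpa only [c, ← hconserved] using sum_sub_average_eq_zero (x t)
  have hdecay (t : ℝ) (ht : 0 ≤ t) : V t ≤ V 0 * exp (-(2 * μ) * t) := by
    simpa only [sub_zero] using
      le_mul_exp_of_hasDerivAt_le_mul (fun s hs => hasDerivAt_sum_sq_sub (hode s hs) c)
        (fun s hs => sum_mul_neg_mulVec_le (hones s) (hconn s) (hmean s hs)) ht
  have hbound : Tendsto (fun t => V 0 * exp (-(2 * μ) * t)) atTop (𝓝 0) := by
    have hrate : Tendsto (fun t : ℝ => -(2 * μ) * t) atTop atBot :=
      tendsto_id.const_mul_atTop_of_neg (by linarith)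
    simpa using (tendsto_exp_atBot.comp hrate).const_mul (V 0)
  refine tendsto_of_tendsto_sum_sq_sub (squeeze_zero' ?_ ?_ hbound) i
  · exact Eventually.of_forall fun t => Finset.sum_nonneg fun j _ => sq_nonneg _
  · filter_upwards [eventually_ge_atTop 0] with t ht using hdecay t ht

end Consensus

theorem first_order_consensus_general
    (n : ℕ) (μ : ℝ) (hμ : 0 < μ)
    (L : ℝ → Matrix (Fin n) (Fin n) ℝ)
    (hsymm : ∀ t, (L t).IsSymm)
    (hones : ∀ t, (L t) *ᵥ (fun _ => (1 : ℝ)) = 0)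
    (hconn : ∀ t, ∀ y : Fin n → ℝ, (∑ i, y i) = 0 →
      μ * (∑ i, (y i) ^ 2) ≤ ∑ i, y i * ((L t) *ᵥ y) i)
    (x : ℝ → Fin n → ℝ)
    (hode : ∀ t, 0 ≤ t → HasDerivAt x (-((L t) *ᵥ x t)) t) :
    (∀ i, Tendsto (fun t => x t i) atTop (nhds ((1 / (n : ℝ)) * ∑ j, x 0 j))) ∧
    (∀ i j, Tendsto (fun t => |x t i - x t j|) atTop (nhds 0)) := by
  have hlim (i : Fin n) := tendsto_average_of_consensus hμ hsymm hones hconn hode i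
  simp only [Fintype.card_fin] at hlim
  refine ⟨hlim, fun i j => ?_⟩
  simpa using ((hlim i).sub (hlim j)).abs

/-- First-order consensus under time-varying symmetric Laplacians with a
uniform algebraic-connectivity lower bound `μ > 0`: every agent's state converges to the
initial average, and in particular all pairwise disagreements vanish. -/
theorem first_order_consensus
    (n : ℕ) (hn : 1 ≤ n) (μ : ℝ) (hμ : 0 < μ)
    (L : ℝ → Matrix (Fin n) (Fin n) ℝ)
    (hsymm : ∀ t, (L t).IsSymm)
    (hones : ∀ t, (L t) *ᵥ (fun _ => (1 : ℝ)) = 0)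
    (hconn : ∀ t, ∀ y : Fin n → ℝ, (∑ i, y i) = 0 →
      μ * (∑ i, (y i) ^ 2) ≤ ∑ i, y i * ((L t) *ᵥ y) i)
    (x : ℝ → Fin n → ℝ)
    (hdiff : Differentiable ℝ x)
    (hode : ∀ t, 0 ≤ t → HasDerivAt x (-((L t) *ᵥ x t)) t) :
    (∀ i, Tendsto (fun t => x t i) atTop (nhds ((1 / (n : ℝ)) * ∑ j, x 0 j))) ∧
    (∀ i j, Tendsto (fun t => |x t i - x t j|) atTop (nhds 0)) :=
  first_order_consensus_general n μ hμ L hsymm hones hconn x hode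
end

section
/- Let n ≥ 1, let L : Matrix (Fin n) (Fin n) ℝ be symmetric with L *ᵥ 𝟙 = 0, and suppose there is μ > 0 with ⟪y, L *ᵥ y⟫ ≥ μ‖y‖² for every y ∈ ℝⁿ satisfying ∑ᵢ yᵢ = 0. Let α > 0 and β > 0, and let x, v : ℝ → (Fin n → ℝ) be differentiable functions satisfying the second-order consensus dynamics x′(t) = v(t) and v′(t) = −α (L *ᵥ x(t)) − β (L *ᵥ v(t)) for all t ≥ 0. Then second-order consensus is achieved: for all i, j, |xᵢ(t) − xⱼ(t)| → 0 and |vᵢ(t) − vⱼ(t)| → 0 as t → ∞. -/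
/-!
Subtracting the mean of the agents removes the conserved drift: the centred positions `X` and
velocities `V` obey the same dynamics and stay in `𝟙ᗮ`, where `⟪y, L y⟫ ≥ μ ‖y‖²`. On them,
`W = (α + εβ) ⟪X, L X⟫ + ‖V‖² + 2ε ⟪X, V⟫` is a strict Lyapunov function: the extra `εβ`
cancels the cross term `⟪X, L V⟫` in `W'`, leaving `W' = -2β ⟪V, L V⟫ + 2ε ‖V‖² - 2εα ⟪X, L X⟫`,
and for small `ε > 0` coercivity gives both `W' ≤ -ε W` and `W ≥ c (‖X‖² + ‖V‖²)`.
Grönwall then makes `X` and `V` decay exponentially.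
-/

open Filter Matrix Real Topology
open scoped BigOperators

section

variable {ι : Type*} [Fintype ι]

theorem dotProduct_self_nonneg (x : ι → ℝ) : 0 ≤ x ⬝ᵥ x := by
  simpa using dotProduct_self_star_nonneg x

theorem Matrix.IsSymm.dotProduct_mulVec_comm {L : Matrix ι ι ℝ} (hL : L.IsSymm) (x y : ι → ℝ) :
    x ⬝ᵥ (L *ᵥ y) = y ⬝ᵥ (L *ᵥ x) := by
  rw [dotProduct_mulVec, ← mulVec_transpose, hL.eq, dotProduct_comm]

theorem Matrix.IsSymm.sum_mulVec_eq_zero {L : Matrix ι ι ℝ} (hL : L.IsSymm)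
    (hones : L *ᵥ (fun _ => (1 : ℝ)) = 0) (x : ι → ℝ) : ∑ i, (L *ᵥ x) i = 0 := by
  simpa [hones, dotProduct] using hL.dotProduct_mulVec_comm (fun _ => 1) x

theorem two_mul_abs_dotProduct_le (x y : ι → ℝ) : 2 * |x ⬝ᵥ y| ≤ x ⬝ᵥ x + y ⬝ᵥ y := by
  have key : ∀ z : ι → ℝ, 2 * (x ⬝ᵥ z) ≤ x ⬝ᵥ x + z ⬝ᵥ z := fun z => by
    simp only [dotProduct, Finset.mul_sum, ← Finset.sum_add_distrib]
    exact Finset.sum_le_sum fun i _ => by nlinarith [sq_nonneg (x i - z i)]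
  have hneg := key (-y)
  rw [dotProduct_neg, neg_dotProduct, dotProduct_neg, neg_neg] at hneg
  cases abs_cases (x ⬝ᵥ y) <;> linarith [key y]

theorem HasDerivAt.dotProduct {f g : ℝ → ι → ℝ} {f' g' : ι → ℝ} {t : ℝ}
    (hf : HasDerivAt f f' t) (hg : HasDerivAt g g' t) :
    HasDerivAt (fun s => f s ⬝ᵥ g s) (f' ⬝ᵥ g t + f t ⬝ᵥ g') t := by
  have h := HasDerivAt.fun_sum (u := Finset.univ) fun i _ =>
    (hasDerivAt_pi.1 hf i).fun_mul (hasDerivAt_pi.1 hg i)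
  rwa [Finset.sum_add_distrib] at h

theorem HasDerivAt.mulVec (L : Matrix ι ι ℝ) {f : ℝ → ι → ℝ} {f' : ι → ℝ} {t : ℝ}
    (hf : HasDerivAt f f' t) : HasDerivAt (fun s => L *ᵥ f s) (L *ᵥ f') t :=
  hasDerivAt_pi.2 fun i => by
    have h := (hasDerivAt_const t (fun j => L i j)).dotProduct hf
    rw [zero_dotProduct, zero_add] at h
    exact h

theorem le_mul_exp_of_hasDerivAt_le {W W' : ℝ → ℝ} {γ : ℝ}
    (hW : ∀ t, 0 ≤ t → HasDerivAt W (W' t) t) (hle : ∀ t, 0 ≤ t → W' t ≤ -γ * W t)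
    {t : ℝ} (ht : 0 ≤ t) : W t ≤ W 0 * exp (-γ * t) := by
  have hcont : ContinuousOn W (Set.Icc 0 t) := fun s hs =>
    (hW s hs.1).continuousAt.continuousWithinAt
  have h := le_gronwallBound_of_liminf_deriv_right_le (K := -γ) (ε := 0) hcont
    (fun s hs r hr => (hW s hs.1).hasDerivWithinAt.liminf_right_slope_le hr) le_rfl
    (fun s hs => (hle s hs.1).trans_eq (add_zero _).symm) t ⟨ht, le_rfl⟩
  rwa [gronwallBound_ε0, sub_zero] at h

theorem tendsto_nhds_zero_of_dotProduct_self_le {X : ℝ → ι → ℝ} {C γ : ℝ} (hγ : 0 < γ)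
    (hX : ∀ t, 0 ≤ t → X t ⬝ᵥ X t ≤ C * exp (-γ * t)) : Tendsto X atTop (𝓝 0) := by
  have hC : Tendsto (fun t => √(C * exp (-γ * t))) atTop (𝓝 0) := by
    simpa using ((tendsto_exp_atBot.comp
      (tendsto_id.const_mul_atTop_of_neg (neg_neg_of_pos hγ))).const_mul C).sqrt
  refine tendsto_pi_nhds.2 fun i => squeeze_zero_norm' ?_ hC
  filter_upwards [eventually_ge_atTop 0] with t ht
  refine Real.abs_le_sqrt (le_trans ?_ (hX t ht))
  simpa [dotProduct, sq] using Finset.single_le_sum (f := fun j => X t j * X t j)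
    (fun j _ => mul_self_nonneg _) (Finset.mem_univ i)

noncomputable def centering : (ι → ℝ) →ₗ[ℝ] ι → ℝ where
  toFun a i := a i - 𝔼 j, a j
  map_add' a b := by
    ext i
    simp only [Pi.add_apply, Finset.expect_add_distrib]
    ring
  map_smul' c a := by
    ext i
    simp only [Pi.smul_apply, smul_eq_mul, ← Finset.mul_expect, RingHom.id_apply]
    ring

theorem centering_apply (a : ι → ℝ) (i : ι) : centering a i = a i - 𝔼 j, a j := rfl

theorem sum_centering (a : ι → ℝ) : ∑ i, centering a i = 0 := by
  simp only [centering_apply]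
  rw [Finset.sum_sub_distrib, Finset.sum_const, Finset.card_univ,
    Fintype.card_smul_expect, sub_self]

theorem centering_of_sum_eq_zero {a : ι → ℝ} (h : ∑ i, a i = 0) : centering a = a := by
  ext i
  simp [centering_apply, Fintype.expect_eq_sum_div_card, h]

theorem centering_sub_centering (a : ι → ℝ) (i j : ι) :
    centering a i - centering a j = a i - a j := by
  simp [centering_apply]

theorem mulVec_centering {L : Matrix ι ι ℝ} (hones : L *ᵥ (fun _ => (1 : ℝ)) = 0) (a : ι → ℝ) :
    L *ᵥ centering a = L *ᵥ a := by
  have h : centering a = a - (𝔼 j, a j) • fun _ => 1 := by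
    ext i
    simp [centering_apply]
  rw [h, mulVec_sub, mulVec_smul, hones, smul_zero, sub_zero]

theorem HasDerivAt.centering {f : ℝ → ι → ℝ} {f' : ι → ℝ} {t : ℝ} (hf : HasDerivAt f f' t) :
    HasDerivAt (fun s => centering (f s)) (centering f') t :=
  (LinearMap.toContinuousLinearMap (_root_.centering (ι := ι))).hasFDerivAt.comp_hasDerivAt t hf

section Lyapunov

variable {L : Matrix ι ι ℝ} {μ α β ε : ℝ}

noncomputable def secondOrderLyapunov (L : Matrix ι ι ℝ) (α β ε : ℝ) (x v : ι → ℝ) : ℝ :=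
  (α + ε * β) * (x ⬝ᵥ (L *ᵥ x)) + v ⬝ᵥ v + 2 * ε * (x ⬝ᵥ v)

noncomputable def secondOrderLyapunovDeriv (L : Matrix ι ι ℝ) (α β ε : ℝ) (x v : ι → ℝ) : ℝ :=
  -2 * β * (v ⬝ᵥ (L *ᵥ v)) + 2 * ε * (v ⬝ᵥ v) - 2 * ε * α * (x ⬝ᵥ (L *ᵥ x))

theorem hasDerivAt_secondOrderLyapunov (hL : L.IsSymm) {X V : ℝ → ι → ℝ} {t : ℝ}
    (hX : HasDerivAt X (V t) t)
    (hV : HasDerivAt V (-(α • (L *ᵥ X t)) - β • (L *ᵥ V t)) t) :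
    HasDerivAt (fun s => secondOrderLyapunov L α β ε (X s) (V s))
      (secondOrderLyapunovDeriv L α β ε (X t) (V t)) t := by
  have h := (((hX.dotProduct (hX.mulVec L)).const_mul (α + ε * β)).add (hV.dotProduct hV)).add
    ((hX.dotProduct hV).const_mul (2 * ε))
  refine h.congr_deriv ?_
  simp only [secondOrderLyapunovDeriv, dotProduct_sub, sub_dotProduct, dotProduct_neg,
    neg_dotProduct, dotProduct_smul, smul_dotProduct, smul_eq_mul,
    hL.dotProduct_mulVec_comm (X t) (V t), dotProduct_comm (L *ᵥ X t), dotProduct_comm (L *ᵥ V t)]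
  ring

theorem secondOrderLyapunov_lower_bound (hμ : 0 ≤ μ) (hα : 0 ≤ α) (hβ : 0 ≤ β) (hε : 0 ≤ ε)
    (hε₁ : ε ≤ 1 / 2) (hεα : ε ≤ α * μ / 2) {x v : ι → ℝ}
    (hx : μ * (x ⬝ᵥ x) ≤ x ⬝ᵥ (L *ᵥ x)) :
    α * μ / 2 * (x ⬝ᵥ x) + (v ⬝ᵥ v) / 2 ≤ secondOrderLyapunov L α β ε x v := by
  have hcross := two_mul_abs_dotProduct_le x v
  have hxx := dotProduct_self_nonneg x
  have hvv := dotProduct_self_nonneg v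
  unfold secondOrderLyapunov
  nlinarith [neg_abs_le (x ⬝ᵥ v), mul_nonneg hε hβ, mul_nonneg hμ hxx]

theorem secondOrderLyapunovDeriv_le (hμ : 0 < μ) (hα : 0 ≤ α) (hβ : 0 ≤ β) (hε : 0 ≤ ε)
    (hε₁ : ε ≤ 1) (hεα : ε ≤ α * μ / 2) (hεβ : 2 * β * ε ≤ α) (hεμ : 2 * ε ≤ β * μ)
    {x v : ι → ℝ} (hx : μ * (x ⬝ᵥ x) ≤ x ⬝ᵥ (L *ᵥ x)) (hv : μ * (v ⬝ᵥ v) ≤ v ⬝ᵥ (L *ᵥ v)) :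
    secondOrderLyapunovDeriv L α β ε x v ≤ -ε * secondOrderLyapunov L α β ε x v := by
  have hcross := two_mul_abs_dotProduct_le x v
  have hxx := dotProduct_self_nonneg x
  have hvv := dotProduct_self_nonneg v
  have hQ : 0 ≤ x ⬝ᵥ (L *ᵥ x) := (mul_nonneg hμ.le hxx).trans hx
  have hp : 2 * ε ^ 2 * (x ⬝ᵥ v) ≤ ε ^ 2 * (x ⬝ᵥ x + v ⬝ᵥ v) := by
    nlinarith [le_abs_self (x ⬝ᵥ v), sq_nonneg ε]
  have hs : ε ^ 2 * (x ⬝ᵥ x) ≤ ε * α / 2 * (x ⬝ᵥ (L *ᵥ x)) := by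
    nlinarith [mul_le_mul_of_nonneg_right hεα (mul_nonneg hε hxx),
      mul_le_mul_of_nonneg_left hx (mul_nonneg hε hα)]
  have hεQ : ε ^ 2 * β * (x ⬝ᵥ (L *ᵥ x)) ≤ ε * α / 2 * (x ⬝ᵥ (L *ᵥ x)) := by
    nlinarith [mul_le_mul_of_nonneg_right hεβ (mul_nonneg hε hQ)]
  have hr : ε ^ 2 * (v ⬝ᵥ v) ≤ ε * (v ⬝ᵥ v) := by
    nlinarith [mul_le_mul_of_nonneg_right hε₁ (mul_nonneg hε hvv)]
  have hR : 4 * ε * (v ⬝ᵥ v) ≤ 2 * β * (v ⬝ᵥ (L *ᵥ v)) := by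
    nlinarith [mul_le_mul_of_nonneg_right hεμ hvv, mul_le_mul_of_nonneg_left hv hβ]
  unfold secondOrderLyapunovDeriv secondOrderLyapunov
  linarith

end Lyapunov

theorem tendsto_abs_sub_of_tendsto_centering {x : ℝ → ι → ℝ} {l : Filter ℝ}
    (h : Tendsto (fun t => centering (x t)) l (𝓝 0)) (i j : ι) :
    Tendsto (fun t => |x t i - x t j|) l (𝓝 0) := by
  simpa [centering_sub_centering] using
    ((tendsto_pi_nhds.1 h i).sub (tendsto_pi_nhds.1 h j)).abs

theorem tendsto_zero_of_secondOrderDynamics {L : Matrix ι ι ℝ} (hL : L.IsSymm) {K : Set (ι → ℝ)}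
    {μ : ℝ} (hμ : 0 < μ) (hK : ∀ y ∈ K, μ * (y ⬝ᵥ y) ≤ y ⬝ᵥ (L *ᵥ y))
    {α β : ℝ} (hα : 0 < α) (hβ : 0 < β) {X V : ℝ → ι → ℝ}
    (hXK : ∀ t, 0 ≤ t → X t ∈ K) (hVK : ∀ t, 0 ≤ t → V t ∈ K)
    (hX : ∀ t, 0 ≤ t → HasDerivAt X (V t) t)
    (hV : ∀ t, 0 ≤ t → HasDerivAt V (-(α • (L *ᵥ X t)) - β • (L *ᵥ V t)) t) :
    Tendsto X atTop (𝓝 0) ∧ Tendsto V atTop (𝓝 0) := by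
  obtain ⟨ε, hε, hε₁, hεα, hεβ, hεμ⟩ : ∃ ε > 0,
      ε ≤ 1 / 2 ∧ ε ≤ α * μ / 2 ∧ ε ≤ α / (2 * β) ∧ ε ≤ β * μ / 2 :=
    ⟨min (min (1 / 2) (α * μ / 2)) (min (α / (2 * β)) (β * μ / 2)), by positivity, by simp⟩
  set W := fun t => secondOrderLyapunov L α β ε (X t) (V t)
  have hdecay : ∀ t, 0 ≤ t → W t ≤ W 0 * exp (-ε * t) := fun t =>
    le_mul_exp_of_hasDerivAt_le (fun s hs => hasDerivAt_secondOrderLyapunov hL (hX s hs) (hV s hs))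
      fun s hs => secondOrderLyapunovDeriv_le hμ hα.le hβ.le hε.le (by linarith) hεα
        ((le_div_iff₀' (by positivity)).1 hεβ) (by linarith)
        (hK _ (hXK s hs)) (hK _ (hVK s hs))
  have hlower : ∀ t, 0 ≤ t → α * μ / 2 * (X t ⬝ᵥ X t) + (V t ⬝ᵥ V t) / 2 ≤ W t := fun t ht =>
    secondOrderLyapunov_lower_bound hμ.le hα.le hβ.le hε.le hε₁ hεα (hK _ (hXK t ht))
  have hαμ : 0 < α * μ := mul_pos hα hμ
  refine ⟨tendsto_nhds_zero_of_dotProduct_self_le (C := 2 * W 0 / (α * μ)) hε fun t ht => ?_,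
    tendsto_nhds_zero_of_dotProduct_self_le (C := 2 * W 0) hε fun t ht => ?_⟩
  · rw [div_mul_eq_mul_div, le_div_iff₀ hαμ]
    nlinarith [hlower t ht, hdecay t ht, dotProduct_self_nonneg (V t)]
  · nlinarith [hlower t ht, hdecay t ht, mul_nonneg hαμ.le (dotProduct_self_nonneg (X t))]

end

theorem second_order_consensus_general
    (n : ℕ)
    (L : Matrix (Fin n) (Fin n) ℝ)
    (hsymm : L.IsSymm)
    (hones : L *ᵥ (fun _ => (1 : ℝ)) = 0)
    (μ : ℝ) (hμ : 0 < μ)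
    (hconn : ∀ y : Fin n → ℝ, (∑ i, y i) = 0 →
      μ * (∑ i, (y i) ^ 2) ≤ ∑ i, y i * (L *ᵥ y) i)
    (α β : ℝ) (hα : 0 < α) (hβ : 0 < β)
    (x v : ℝ → Fin n → ℝ)
    (hodex : ∀ t, 0 ≤ t → HasDerivAt x (v t) t)
    (hodev : ∀ t, 0 ≤ t → HasDerivAt v (-(α • (L *ᵥ x t)) - β • (L *ᵥ v t)) t) :
    (∀ i j, Tendsto (fun t => |x t i - x t j|) atTop (nhds 0)) ∧
    (∀ i j, Tendsto (fun t => |v t i - v t j|) atTop (nhds 0)) := by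
  have hK : ∀ y ∈ {y : Fin n → ℝ | ∑ i, y i = 0}, μ * (y ⬝ᵥ y) ≤ y ⬝ᵥ (L *ᵥ y) :=
    fun y hy => by simpa [dotProduct, sq] using hconn y hy
  have hcenter : ∀ y, centering (L *ᵥ y) = L *ᵥ centering y := fun y => by
    rw [centering_of_sum_eq_zero (hsymm.sum_mulVec_eq_zero hones y), mulVec_centering hones]
  obtain ⟨hx, hv⟩ := tendsto_zero_of_secondOrderDynamics hsymm hμ hK hα hβ
    (fun t _ => sum_centering (x t)) (fun t _ => sum_centering (v t))
    (fun t ht => (hodex t ht).centering) fun t ht => by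
      simpa only [map_sub, map_neg, map_smul, hcenter] using (hodev t ht).centering
  exact ⟨tendsto_abs_sub_of_tendsto_centering hx, tendsto_abs_sub_of_tendsto_centering hv⟩

/-- Second-order consensus: for a fixed symmetric Laplacian `L` with
`L 𝟙 = 0` and algebraic connectivity at least `μ > 0`, and gains `α, β > 0`, the
dynamics `x' = v`, `v' = -α L x - β L v` achieve consensus in positions and velocities. -/
theorem second_order_consensus
    (n : ℕ) (hn : 1 ≤ n)
    (L : Matrix (Fin n) (Fin n) ℝ)
    (hsymm : L.IsSymm)
    (hones : L *ᵥ (fun _ => (1 : ℝ)) = 0)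
    (μ : ℝ) (hμ : 0 < μ)
    (hconn : ∀ y : Fin n → ℝ, (∑ i, y i) = 0 →
      μ * (∑ i, (y i) ^ 2) ≤ ∑ i, y i * (L *ᵥ y) i)
    (α β : ℝ) (hα : 0 < α) (hβ : 0 < β)
    (x v : ℝ → Fin n → ℝ)
    (hdx : Differentiable ℝ x) (hdv : Differentiable ℝ v)
    (hodex : ∀ t, 0 ≤ t → HasDerivAt x (v t) t)
    (hodev : ∀ t, 0 ≤ t → HasDerivAt v (-(α • (L *ᵥ x t)) - β • (L *ᵥ v t)) t) :
    (∀ i j, Tendsto (fun t => |x t i - x t j|) atTop (nhds 0)) ∧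
    (∀ i j, Tendsto (fun t => |v t i - v t j|) atTop (nhds 0)) :=
  second_order_consensus_general n L hsymm hones μ hμ hconn α β hα hβ x v hodex hodev
end

section
/- Let n ≥ 1, fix a root r : Fin n, and let z : Fin n → Fin n → ℝ be symmetric with values in {0, 1} and z i i = 0. Suppose there exists f : Fin n → Fin n → ℝ with: 0 ≤ f i j ≤ (n − 1) · z i j for all i, j; ∑_j f j k − ∑_j f k j = 1 for every node k ≠ r; and ∑_j f r j − ∑_j f j r = n − 1. Then the simple graph on Fin n whose adjacency relation is {(i, j) : i ≠ j ∧ z i j = 1} is connected (every two nodes are joined by a path in this graph). -/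
/-!
Let `S` be the set of vertices not reachable from `r` in the graph of edges carrying nonzero
flow. No flow crosses between `S` and its complement, so the flow along edges inside `S`
cancels in the total net inflow of `S`, which is therefore `0`. But every vertex of `S` differs
from `r` and so has positive net inflow; hence `S` is empty.
-/

open Finset

variable {V M : Type*} [Fintype V]

def netInflow [AddCommGroup M] (f : V → V → M) (k : V) : M :=
  ∑ j, f j k - ∑ j, f k j

theorem sum_netInflow_eq_zero_of_no_crossing [AddCommGroup M] (f : V → V → M) (S : Finset V)
    (hS : ∀ j ∉ S, ∀ k ∈ S, f j k = 0 ∧ f k j = 0) :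
    ∑ k ∈ S, netInflow f k = 0 := by
  have inflow_within : ∀ k ∈ S, ∑ j, f j k = ∑ j ∈ S, f j k := fun k hk =>
    (sum_subset (subset_univ S) fun j _ hj => (hS j hj k hk).1).symm
  have outflow_within : ∀ k ∈ S, ∑ j, f k j = ∑ j ∈ S, f k j := fun k hk =>
    (sum_subset (subset_univ S) fun j _ hj => (hS j hj k hk).2).symm
  unfold netInflow
  rw [sum_sub_distrib, sum_congr rfl inflow_within, sum_congr rfl outflow_within, sum_comm,
    sub_self]

theorem connected_fromRel_ne_zero_of_netInflow_pos
    [AddCommGroup M] [PartialOrder M] [IsOrderedCancelAddMonoid M]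
    (f : V → V → M) (r : V) (hpos : ∀ k ≠ r, 0 < netInflow f k) :
    (SimpleGraph.fromRel fun j k => f j k ≠ 0).Connected := by
  classical
  set G := SimpleGraph.fromRel fun j k => f j k ≠ 0
  refine (G.connected_iff_exists_forall_reachable).2 ⟨r, fun k => ?_⟩
  by_contra hk
  set S := univ.filter fun k => ¬ G.Reachable r k
  have no_crossing : ∀ j ∉ S, ∀ k ∈ S, f j k = 0 ∧ f k j = 0 := by
    intro j hj k hk
    simp only [S, mem_filter, mem_univ, true_and, not_not] at hj hk
    have hjk : j ≠ k := by rintro rfl; exact hk hj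
    by_contra hflow
    exact hk (hj.trans (SimpleGraph.Adj.reachable
      ((SimpleGraph.fromRel_adj _ j k).2 ⟨hjk, not_and_or.mp hflow⟩)))
  have hrS : ∀ k ∈ S, k ≠ r := by
    rintro k hk rfl
    simp [S] at hk
  have hSpos : 0 < ∑ k ∈ S, netInflow f k :=
    sum_pos (fun k hkS => hpos k (hrS k hkS)) ⟨k, by simpa [S] using hk⟩
  exact hSpos.ne' (sum_netInflow_eq_zero_of_no_crossing f S no_crossing)

theorem flow_certifies_connectivity_general
    (n : ℕ) (r : Fin n)
    (z : Fin n → Fin n → ℝ)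
    (hz01 : ∀ i j, z i j = 0 ∨ z i j = 1)
    (f : Fin n → Fin n → ℝ)
    (hcap : ∀ i j, 0 ≤ f i j ∧ f i j ≤ ((n : ℝ) - 1) * z i j)
    (hcons : ∀ k : Fin n, k ≠ r → (∑ j, f j k) - (∑ j, f k j) = 1)
    (G : SimpleGraph (Fin n))
    (hG : ∀ i j, G.Adj i j ↔ i ≠ j ∧ z i j = 1) :
    G.Connected := by
  have flow_on_edge : ∀ i j, i ≠ j → f i j ≠ 0 → G.Adj i j := by
    intro i j hij hf
    refine (hG i j).2 ⟨hij, (hz01 i j).resolve_left fun hz => hf ?_⟩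
    have := hcap i j
    rw [hz, mul_zero] at this
    exact le_antisymm this.2 this.1
  have support_le : (SimpleGraph.fromRel fun j k => f j k ≠ 0) ≤ G := by
    rintro i j ⟨hij, hf | hf⟩
    · exact flow_on_edge i j hij hf
    · exact (flow_on_edge j i hij.symm hf).symm
  refine (connected_fromRel_ne_zero_of_netInflow_pos f r fun k hk => ?_).mono support_le
  rw [netInflow, hcons k hk]
  exact one_pos

/-- A feasible flow for the flow-based formulation certifies connectivity:
if binary symmetric edge indicators `z` admit flows `f` with capacity
`0 ≤ f i j ≤ (n-1) z i j`, unit net inflow at every non-root node, and net outflow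
`n - 1` at the root `r`, then the graph whose edges are `{(i,j) : i ≠ j ∧ z i j = 1}`
is connected. -/
theorem flow_certifies_connectivity
    (n : ℕ) (hn : 1 ≤ n) (r : Fin n)
    (z : Fin n → Fin n → ℝ)
    (hzsymm : ∀ i j, z i j = z j i)
    (hz01 : ∀ i j, z i j = 0 ∨ z i j = 1)
    (hzdiag : ∀ i, z i i = 0)
    (f : Fin n → Fin n → ℝ)
    (hcap : ∀ i j, 0 ≤ f i j ∧ f i j ≤ ((n : ℝ) - 1) * z i j)
    (hcons : ∀ k : Fin n, k ≠ r → (∑ j, f j k) - (∑ j, f k j) = 1)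
    (hroot : (∑ j, f r j) - (∑ j, f j r) = (n : ℝ) - 1)
    (G : SimpleGraph (Fin n))
    (hG : ∀ i j, G.Adj i j ↔ i ≠ j ∧ z i j = 1) :
    G.Connected :=
  flow_certifies_connectivity_general n r z hz01 f hcap hcons G hG
end

section
/- Let N ≥ 1, let H : Matrix (Fin N) (Fin N) ℂ be Hermitian, let λmin denote its smallest eigenvalue, and let ψ₀ ∈ ℂ^N be a vector whose orthogonal projection onto the λmin-eigenspace of H is nonzero. For τ ∈ ℝ let ψ_τ = exp(−τ • H) *ᵥ ψ₀ (matrix exponential applied to ψ₀); note ψ_τ ≠ 0 for all τ. Then the energy (Rayleigh quotient) of the evolved state converges to the ground energy: ⟪ψ_τ, H *ᵥ ψ_τ⟫ / ‖ψ_τ‖² → λmin as τ → ∞. -/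
/-!
Expand `ψ₀` in an orthonormal eigenbasis of `H`, with coefficients `cᵢ`. Then `exp (-τ H)`
multiplies `cᵢ` by `exp (-τ λᵢ)`, so the energy of `ψ_τ` is the average of the eigenvalues
`λᵢ` with weights `exp (-2τ λᵢ) ‖cᵢ‖²`. Rescaled by `exp (2τ λmin)`, these weights tend to
`‖cᵢ‖²` on the ground eigenspace and to `0` elsewhere; the nonzero projection of `ψ₀` makes
the limiting total weight positive, so the average tends to `λmin`.
-/

open Filter Matrix Topology Module.End

theorem tendsto_exp_neg_mul_atTop {d : ℝ} (hd : 0 ≤ d) :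
    Tendsto (fun t : ℝ => Real.exp (-(t * d))) atTop (𝓝 (if d = 0 then 1 else 0)) := by
  split_ifs with h
  · simp [h]
  · exact Real.tendsto_exp_atBot.comp
      (tendsto_neg_atTop_atBot.comp (tendsto_id.atTop_mul_const (hd.lt_of_ne' h)))

theorem tendsto_sum_mul_exp_div_sum_exp {ι : Type*} [Fintype ι] {l a : ι → ℝ} {m : ℝ}
    (hm : ∀ i, m ≤ l i) (ha : ∀ i, 0 ≤ a i) (hground : ∃ i, l i = m ∧ 0 < a i) :
    Tendsto (fun t : ℝ => (∑ i, l i * (Real.exp (-(t * l i)) * a i)) /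
      ∑ i, Real.exp (-(t * l i)) * a i) atTop (𝓝 m) := by
  set P := ∑ i, if l i = m then a i else 0
  have hP : 0 < P := by
    obtain ⟨i₀, hi₀, ha₀⟩ := hground
    refine Finset.sum_pos' (fun i _ => ?_)
      ⟨i₀, Finset.mem_univ _, by simpa [hi₀] using ha₀⟩
    split_ifs
    exacts [ha i, le_rfl]
  -- after rescaling by `exp (t m)`, the weights converge to those of the ground states
  have hw : ∀ i, Tendsto (fun t : ℝ => Real.exp (-(t * (l i - m))) * a i) atTop
      (𝓝 (if l i = m then a i else 0)) := fun i => by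
    simpa [sub_eq_zero, apply_ite (· * a i)] using
      (tendsto_exp_neg_mul_atTop (sub_nonneg.mpr (hm i))).mul_const (a i)
  have hnum : Tendsto (fun t : ℝ => ∑ i, l i * (Real.exp (-(t * (l i - m))) * a i)) atTop
      (𝓝 (m * P)) := by
    rw [Finset.mul_sum]
    refine tendsto_finsetSum _ fun i _ => ?_
    convert (hw i).const_mul (l i) using 2
    split_ifs with h <;> simp [h]
  have hden := tendsto_finsetSum Finset.univ fun i _ => hw i
  refine ((hnum.div hden hP.ne').congr fun t => ?_).trans ?_
  · have hexp : ∀ i,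
        Real.exp (-(t * (l i - m))) = Real.exp (t * m) * Real.exp (-(t * l i)) := fun i => by
      rw [← Real.exp_add]
      ring_nf
    simp only [Pi.div_apply, hexp, mul_assoc, mul_left_comm (l _), ← Finset.mul_sum]
    rw [mul_div_mul_left _ _ (Real.exp_pos _).ne']
  · rw [mul_div_cancel_right₀ _ hP.ne']

namespace OrthonormalBasis

variable {𝕜 E ι : Type*} [RCLike 𝕜] [NormedAddCommGroup E] [InnerProductSpace 𝕜 E]
  [Fintype ι] (B : OrthonormalBasis ι 𝕜 E)

theorem inner_eq_sum_conj_repr_mul_repr (x y : E) :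
    inner 𝕜 x y = ∑ i, (starRingEnd 𝕜) (B.repr x i) * B.repr y i := by
  simp only [B.repr_apply_apply, inner_conj_symm, B.sum_inner_mul_inner]

theorem norm_sq_eq_sum_norm_repr_sq (x : E) : ‖x‖ ^ 2 = ∑ i, ‖B.repr x i‖ ^ 2 := by
  rw [← B.repr.norm_map, EuclideanSpace.norm_sq_eq]

variable {B} {T : E →ₗ[𝕜] E}

theorem repr_apply_of_apply_eq_smul {μ : ι → 𝕜} (hT : ∀ i, T (B i) = μ i • B i)
    (x : E) (i : ι) : B.repr (T x) i = μ i * B.repr x i := by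
  classical
  conv_lhs => rw [← B.sum_repr x]
  simp [hT, B.repr_self, smul_smul, Finset.sum_apply, Pi.single_apply, mul_comm]

theorem repr_eq_zero_of_mem_eigenspace {μ : ι → 𝕜} (hT : ∀ i, T (B i) = μ i • B i)
    {ν : 𝕜} {v : E} (hv : v ∈ eigenspace T ν) {i : ι} (hi : μ i ≠ ν) : B.repr v i = 0 := by
  have h := repr_apply_of_apply_eq_smul hT v i
  rw [mem_eigenspace_iff.mp hv, map_smul, PiLp.smul_apply, smul_eq_mul] at h
  exact (mul_eq_mul_right_iff.mp h.symm).resolve_left hi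

theorem exists_repr_ne_zero_of_orthogonalProjection_eigenspace_ne_zero {μ : ι → 𝕜}
    (hT : ∀ i, T (B i) = μ i • B i) {ν : 𝕜} [(eigenspace T ν).HasOrthogonalProjection]
    {x : E} (hx : ((eigenspace T ν).orthogonalProjectionOnto x : E) ≠ 0) :
    ∃ i, μ i = ν ∧ B.repr x i ≠ 0 := by
  contrapose! hx
  rw [Submodule.orthogonalProjectionOnto_eq_zero_iff.mpr, ZeroMemClass.coe_zero]
  refine (Submodule.mem_orthogonal _ _).mpr fun v hv => ?_
  rw [B.inner_eq_sum_conj_repr_mul_repr]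
  refine Finset.sum_eq_zero fun i _ => ?_
  by_cases hi : μ i = ν
  · rw [hx i hi, mul_zero]
  · rw [repr_eq_zero_of_mem_eigenspace hT hv hi, map_zero, zero_mul]

theorem inner_apply_self_div_norm_sq {μ : ι → ℝ} (hT : ∀ i, T (B i) = (μ i : 𝕜) • B i)
    (x : E) :
    inner 𝕜 x (T x) / (‖x‖ : 𝕜) ^ 2
      = (((∑ i, μ i * ‖B.repr x i‖ ^ 2) / ∑ i, ‖B.repr x i‖ ^ 2 : ℝ) : 𝕜) := by
  rw [B.inner_eq_sum_conj_repr_mul_repr, ← RCLike.ofReal_pow, B.norm_sq_eq_sum_norm_repr_sq,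
    RCLike.ofReal_div]
  congr 1
  push_cast
  refine Finset.sum_congr rfl fun i _ => ?_
  rw [repr_apply_of_apply_eq_smul hT, mul_left_comm, RCLike.conj_mul]

end OrthonormalBasis

namespace Matrix

variable {𝕜 n : Type*} [RCLike 𝕜] [Fintype n] [DecidableEq n]

theorem exp_mulVec_of_mulVec_eq_smul {A : Matrix n n 𝕜} {v : n → 𝕜} {μ : 𝕜}
    (h : A *ᵥ v = μ • v) : NormedSpace.exp A *ᵥ v = NormedSpace.exp μ • v := by
  have hpow : ∀ k : ℕ, A ^ k *ᵥ v = μ ^ k • v := fun k => by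
    induction k with
    | zero => simp
    | succ k ih => rw [pow_succ, ← mulVec_mulVec, h, mulVec_smul, ih, smul_smul, pow_succ']
  have hA : HasSum (fun k : ℕ => ((k.factorial : 𝕜)⁻¹ • A ^ k) *ᵥ v)
      (NormedSpace.exp A *ᵥ v) := by
    open scoped Norms.Operator in
    exact (NormedSpace.exp_series_hasSum_exp' (𝕂 := 𝕜) A).map (mulVec.addMonoidHomLeft v)
      (continuous_id.matrix_mulVec continuous_const)
  have hμ : HasSum (fun k : ℕ => ((k.factorial : 𝕜)⁻¹ • A ^ k) *ᵥ v)
      (NormedSpace.exp μ • v) := by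
    simp_rw [smul_mulVec, hpow, smul_smul]
    exact (NormedSpace.exp_series_hasSum_exp' (𝕂 := 𝕜) μ).smul_const v
  exact hA.unique hμ

theorem toEuclideanLin_apply_of_mulVec_eq_smul {A : Matrix n n 𝕜} {v : EuclideanSpace 𝕜 n}
    {μ : 𝕜} (h : A *ᵥ v = μ • ⇑v) : toEuclideanLin A v = μ • v := by
  rw [toLpLin_apply, h, WithLp.toLp_smul, WithLp.toLp_ofLp]

namespace IsHermitian

variable {A : Matrix n n 𝕜}

theorem toEuclideanLin_eigenvectorBasis (hA : A.IsHermitian) (j : n) :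
    toEuclideanLin A (hA.eigenvectorBasis j)
      = (hA.eigenvalues j : 𝕜) • hA.eigenvectorBasis j := by
  apply toEuclideanLin_apply_of_mulVec_eq_smul
  rw [hA.mulVec_eigenvectorBasis, RCLike.real_smul_eq_coe_smul (K := 𝕜)]

theorem toEuclideanLin_exp_smul_eigenvectorBasis (hA : A.IsHermitian) (z : 𝕜) (j : n) :
    toEuclideanLin (NormedSpace.exp (z • A)) (hA.eigenvectorBasis j)
      = NormedSpace.exp (z * hA.eigenvalues j) • hA.eigenvectorBasis j := by
  apply toEuclideanLin_apply_of_mulVec_eq_smul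
  apply exp_mulVec_of_mulVec_eq_smul
  rw [smul_mulVec, hA.mulVec_eigenvectorBasis, RCLike.real_smul_eq_coe_smul (K := 𝕜), smul_smul]

end IsHermitian

end Matrix

theorem qite_converges_to_ground_energy_general
    (N : ℕ)
    (H : Matrix (Fin N) (Fin N) ℂ) (hH : H.IsHermitian)
    (lammin : ℝ) (hlam : lammin = ⨅ i, hH.eigenvalues i)
    (ψ₀ : EuclideanSpace ℂ (Fin N))
    (hproj : (Submodule.orthogonalProjectionOnto
        (Module.End.eigenspace (Matrix.toEuclideanLin H) (lammin : ℂ)) ψ₀ : EuclideanSpace ℂ (Fin N)) ≠ 0)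
    (ψ : ℝ → EuclideanSpace ℂ (Fin N))
    (hψ : ∀ τ : ℝ, ψ τ = Matrix.toEuclideanLin (NormedSpace.exp ((-(τ : ℂ)) • H)) ψ₀) :
    (∀ τ : ℝ, ψ τ ≠ 0) ∧
    Tendsto (fun τ : ℝ =>
        (inner ℂ (ψ τ) (Matrix.toEuclideanLin H (ψ τ)) : ℂ) / ((‖ψ τ‖ : ℂ) ^ 2))
      atTop (nhds (lammin : ℂ)) := by
  have hmin : ∀ i, lammin ≤ hH.eigenvalues i := hlam ▸ ciInf_le (Finite.bddBelow_range _)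
  obtain ⟨i₀, hi₀, hc₀⟩ :=
    OrthonormalBasis.exists_repr_ne_zero_of_orthogonalProjection_eigenspace_ne_zero
      hH.toEuclideanLin_eigenvectorBasis hproj
  have hrepr : ∀ τ i, hH.eigenvectorBasis.repr (ψ τ) i
      = Real.exp (-(τ * hH.eigenvalues i)) * hH.eigenvectorBasis.repr ψ₀ i := fun τ i => by
    rw [hψ, OrthonormalBasis.repr_apply_of_apply_eq_smul
      (hH.toEuclideanLin_exp_smul_eigenvectorBasis _), ← Complex.exp_eq_exp_ℂ,
      RCLike.ofReal_eq_complex_ofReal, Complex.ofReal_exp]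
    push_cast
    rw [neg_mul]
  refine ⟨fun τ hτ => hc₀ ?_, ?_⟩
  · simpa [hτ, Real.exp_ne_zero] using hrepr τ i₀
  have hnorm : ∀ τ i, ‖hH.eigenvectorBasis.repr (ψ τ) i‖ ^ 2
      = Real.exp (-(2 * τ * hH.eigenvalues i)) * ‖hH.eigenvectorBasis.repr ψ₀ i‖ ^ 2 := by
    intro τ i
    rw [hrepr, norm_mul, Complex.norm_real, Real.norm_of_nonneg (Real.exp_nonneg _), mul_pow,
      ← Real.exp_nat_mul]
    ring_nf
  have hgibbs := tendsto_sum_mul_exp_div_sum_exp hmin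
    (fun i => sq_nonneg ‖hH.eigenvectorBasis.repr ψ₀ i‖)
    ⟨i₀, Complex.ofReal_injective hi₀, by positivity⟩
  refine ((Complex.continuous_ofReal.tendsto _).comp
    (hgibbs.comp (tendsto_id.const_mul_atTop two_pos))).congr fun τ => Eq.symm ?_
  refine (OrthonormalBasis.inner_apply_self_div_norm_sq
    hH.toEuclideanLin_eigenvectorBasis _).trans ?_
  simp [hnorm]

/-- Imaginary-time evolution converges to the ground energy: for a
Hermitian matrix `H` with smallest eigenvalue `λmin`, and an initial state `ψ₀` whose
orthogonal projection onto the `λmin`-eigenspace is nonzero, the evolved states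
`ψ_τ = exp(-τ H) ψ₀` are nonzero and their Rayleigh quotients converge to `λmin`. -/
theorem qite_converges_to_ground_energy
    (N : ℕ) (hN : 1 ≤ N)
    (H : Matrix (Fin N) (Fin N) ℂ) (hH : H.IsHermitian)
    (lammin : ℝ) (hlam : lammin = ⨅ i, hH.eigenvalues i)
    (ψ₀ : EuclideanSpace ℂ (Fin N))
    (hproj : (Submodule.orthogonalProjectionOnto
        (Module.End.eigenspace (Matrix.toEuclideanLin H) (lammin : ℂ)) ψ₀ : EuclideanSpace ℂ (Fin N)) ≠ 0)
    (ψ : ℝ → EuclideanSpace ℂ (Fin N))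
    (hψ : ∀ τ : ℝ, ψ τ = Matrix.toEuclideanLin (NormedSpace.exp ((-(τ : ℂ)) • H)) ψ₀) :
    (∀ τ : ℝ, ψ τ ≠ 0) ∧
    Tendsto (fun τ : ℝ =>
        (inner ℂ (ψ τ) (Matrix.toEuclideanLin H (ψ τ)) : ℂ) / ((‖ψ τ‖ : ℂ) ^ 2))
      atTop (nhds (lammin : ℂ)) :=
  qite_converges_to_ground_energy_general N H hH lammin hlam ψ₀ hproj ψ hψ
end
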